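/- Let d ≥ 1 and let z_1, …, z_{2d+1} ∈ Ω^d be points satisfying Re⟨z_i, z_j⟩ = −1/(2d) for all i ≠ j (a regular simplex on Ω^d). Then z_1, …, z_{2d+1} form a triangular complex spherical 2-design on Ω^d. -/

import Mathlib

noncomputable section
open MeasureTheory Metric MvPolynomial ENNReal

instance (d : ℕ) : MeasurableSpace (EuclideanSpace ℂ (Fin d)) := borel _
instance (d : ℕ) : BorelSpace (EuclideanSpace ℂ (Fin d)) := ⟨rfl⟩

/-- The complex unit sphere `Ω^d ⊆ ℂ^d`. -/
abbrev CSph (d : ℕ) : Type := Metric.sphere (0 : EuclideanSpace ℂ (Fin d)) 1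

def csMap {d : ℕ} (f : EuclideanSpace ℂ (Fin d) ≃ₗᵢ[ℂ] EuclideanSpace ℂ (Fin d))
    (z : CSph d) : CSph d :=
  ⟨f z, by
    have hz := z.2
    simp only [mem_sphere_iff_norm, sub_zero] at hz ⊢
    simp [hz]⟩

/-- `μ` is the uniform (unitarily invariant) probability measure on `Ω^d`. -/
def IsUniformC {d : ℕ} (μ : Measure (CSph d)) : Prop :=
  IsProbabilityMeasure μ ∧
    ∀ f : EuclideanSpace ℂ (Fin d) ≃ₗᵢ[ℂ] EuclideanSpace ℂ (Fin d),
      Measure.map (csMap f) μ = μ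

/-- Evaluation of `Q ∈ ℂ[u₁,…,u_d,v₁,…,v_d]` at `u_j = z_j`, `v_j = conj (z_j)`. -/
def evalC {d : ℕ} (Q : MvPolynomial (Fin d ⊕ Fin d) ℂ) (z : CSph d) : ℂ :=
  MvPolynomial.eval
    (Sum.elim (fun j => (z : EuclideanSpace ℂ (Fin d)) j)
      (fun j => (starRingEnd ℂ) ((z : EuclideanSpace ℂ (Fin d)) j))) Q

/-- A finite family of points of `Ω^d` is a triangular complex spherical `t`-design. -/
def IsTriDesign {d : ℕ} (μ : Measure (CSph d)) (t : ℕ)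
    {ι : Type} [Fintype ι] (z : ι → CSph d) : Prop :=
  ∀ Q : MvPolynomial (Fin d ⊕ Fin d) ℂ, Q.totalDegree ≤ t →
    (Fintype.card ι : ℂ)⁻¹ * ∑ i, evalC Q (z i) = ∫ w, evalC Q w ∂μ

/-- The Hermitian inner product `⟨u,v⟩ = ∑ u_j conj (v_j)` on `ℂ^d`. -/
def hInnerC {d : ℕ} (u v : EuclideanSpace ℂ (Fin d)) : ℂ :=
  ∑ j, u j * (starRingEnd ℂ) (v j)

/-!
Through `Re ⟨u, v⟩`, `ℂ^d` is the real inner product space `ℝ^{2d}`, in which the `2d + 1` points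
form a regular simplex. A regular simplex is centred, `‖∑ zᵢ‖² = ∑ᵢⱼ ⟪zᵢ, zⱼ⟫ = 0`, and a tight
frame: its frame potential `∑ᵢⱼ ⟪zᵢ, zⱼ⟫²` equals the lower bound `(∑ᵢ ‖zᵢ‖²)² / 2d`, which forces
`∑ᵢ ⟪zᵢ, v⟫ zᵢ = ((2d + 1) / 2d) v`. In complex coordinates the points therefore average `z_j`,
`z_j z_k` and `z_j conj z_k` to `0`, `0` and `δ_jk / d`. The uniform measure has the same moments:
multiplying one coordinate by `i` kills every monomial of degree at most two except `|z_j|²`, and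
permuting coordinates together with `∑ |z_j|² = 1` gives `∫ |z_j|² = 1 / d`. Finally, a polynomial
of degree at most two is a combination of `1`, the `z_j`, `conj z_j` and their pairwise products.
-/

open Finset Module
open scoped RealInnerProductSpace ComplexConjugate

theorem MvPolynomial.monomial_one_eq_prod_toMultiset {σ R : Type*} [CommSemiring R]
    (m : σ →₀ ℕ) : monomial m (1 : R) = ((Finsupp.toMultiset m).map X).prod := by
  induction m using Finsupp.induction with
  | zero => simp
  | single_add a n f _ _ ih =>
    rw [← mul_one (1 : R), ← monomial_mul, ih, ← X_pow_eq_monomial]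
    simp [Multiset.map_nsmul, Multiset.prod_nsmul]

theorem MvPolynomial.mem_of_totalDegree_le_two {σ R : Type*} [CommSemiring R]
    {S : Submodule R (MvPolynomial σ R)} (h0 : 1 ∈ S) (h1 : ∀ a, X a ∈ S)
    (h2 : ∀ a b, X a * X b ∈ S) {Q : MvPolynomial σ R} (hQ : Q.totalDegree ≤ 2) : Q ∈ S := by
  rw [Q.as_sum]
  refine S.sum_mem fun m hm => ?_
  have hdeg : Multiset.card (Finsupp.toMultiset m) ≤ 2 := by
    rw [Finsupp.card_toMultiset]
    exact (le_totalDegree hm).trans hQ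
  rw [← mul_one (coeff m Q), ← smul_eq_mul, ← smul_monomial, monomial_one_eq_prod_toMultiset]
  refine S.smul_mem _ ?_
  interval_cases h : Multiset.card (Finsupp.toMultiset m)
  · simpa [Multiset.card_eq_zero.mp h] using h0
  · obtain ⟨a, ha⟩ := Multiset.card_eq_one.mp h
    simpa [ha] using h1 a
  · obtain ⟨a, b, hab⟩ := Multiset.card_eq_two.mp h
    simpa [hab] using h2 a b

section FrameOperator

variable {E : Type*} [NormedAddCommGroup E] [InnerProductSpace ℝ E] {ι : Type*} [Fintype ι]

def frameOperator (x : ι → E) : E →ₗ[ℝ] E := ∑ i, (innerₛₗ ℝ (x i)).smulRight (x i)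

@[simp] theorem frameOperator_apply (x : ι → E) (v : E) :
    frameOperator x v = ∑ i, ⟪x i, v⟫ • x i := by
  simp [frameOperator]

theorem sum_norm_frameOperator_sub_smul_sq {κ : Type*} [Fintype κ]
    (b : OrthonormalBasis κ ℝ E) (x : ι → E) (c : ℝ) :
    ∑ p, ‖frameOperator x (b p) - c • b p‖ ^ 2
      = ∑ i, ∑ j, ⟪x i, x j⟫ ^ 2 - 2 * c * ∑ i, ‖x i‖ ^ 2 + c ^ 2 * Fintype.card κ := by
  have parseval : ∀ u v, ∑ p, ⟪b p, u⟫ * ⟪b p, v⟫ = ⟪u, v⟫ := fun u v => by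
    simpa only [real_inner_comm u] using b.sum_inner_mul_inner u v
  have hterm : ∀ p, ‖frameOperator x (b p) - c • b p‖ ^ 2
      = ∑ i, ∑ j, ⟪b p, x i⟫ * (⟪b p, x j⟫ * ⟪x j, x i⟫)
        - ∑ i, 2 * (c * (⟪b p, x i⟫ * ⟪b p, x i⟫)) + c ^ 2 := fun p => by
    rw [norm_sub_sq_real, ← real_inner_self_eq_norm_sq, norm_smul, b.norm_eq_one]
    simp only [frameOperator_apply, sum_inner, inner_sum, inner_smul_left, inner_smul_right,
      real_inner_comm (b p), Real.norm_eq_abs, conj_trivial, mul_sum]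
    rw [mul_one, sq_abs]
  have hpot : ∑ i, ∑ p, ∑ j, ⟪b p, x i⟫ * (⟪b p, x j⟫ * ⟪x j, x i⟫)
      = ∑ i, ∑ j, ⟪x i, x j⟫ ^ 2 := by
    refine sum_congr rfl fun i _ => ?_
    rw [sum_comm]
    simp only [← mul_assoc, ← sum_mul, parseval]
    simp only [real_inner_comm (x i), sq]
  have hnorm : ∑ p, ∑ i, 2 * (c * (⟪b p, x i⟫ * ⟪b p, x i⟫)) = 2 * c * ∑ i, ‖x i‖ ^ 2 := by
    rw [sum_comm]
    simp only [← mul_sum, parseval, real_inner_self_eq_norm_sq, mul_assoc]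
  simp only [hterm, sum_add_distrib, sum_sub_distrib, sum_const, card_univ, nsmul_eq_mul]
  rw [sum_comm, hpot, hnorm]
  ring

theorem frameOperator_eq_smul_of_frame_potential [FiniteDimensional ℝ E] {x : ι → E} {c : ℝ}
    (hnorm : ∑ i, ‖x i‖ ^ 2 = c * finrank ℝ E)
    (hpot : ∑ i, ∑ j, ⟪x i, x j⟫ ^ 2 = c ^ 2 * finrank ℝ E) :
    frameOperator x = c • LinearMap.id := by
  set b := stdOrthonormalBasis ℝ E
  have hzero : ∑ p, ‖frameOperator x (b p) - c • b p‖ ^ 2 = 0 := by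
    rw [sum_norm_frameOperator_sub_smul_sq, hnorm, hpot, Fintype.card_fin]
    ring
  refine b.toBasis.ext fun p => ?_
  have := (sum_eq_zero_iff_of_nonneg fun p _ => sq_nonneg _).mp hzero p (mem_univ p)
  simpa [sub_eq_zero] using this

section RegularSimplex

variable {n : ℕ} {x : ι → E} (hcard : Fintype.card ι = n + 1) (hnorm : ∀ i, ‖x i‖ = 1)
  (hinner : ∀ i j, i ≠ j → ⟪x i, x j⟫ = -(1 / n))
include hcard hnorm hinner

theorem sum_sum_comp_inner_of_regular_simplex (F : ℝ → ℝ) :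
    ∑ i, ∑ j, F ⟪x i, x j⟫ = (n + 1) * (F 1 + n * F (-(1 / n))) := by
  classical
  have hrow : ∀ i, ∑ j, F ⟪x i, x j⟫ = F 1 + n * F (-(1 / n)) := fun i => by
    rw [← add_sum_erase _ _ (mem_univ i), real_inner_self_eq_norm_sq, hnorm, one_pow,
      sum_congr rfl fun j hj => by rw [hinner i j (ne_of_mem_erase hj).symm], sum_const,
      card_erase_of_mem (mem_univ i), card_univ, hcard, nsmul_eq_mul]
    simp
  simp [hrow, hcard]
  ring

theorem sum_eq_zero_of_regular_simplex (hn : n ≠ 0) : ∑ i, x i = 0 := by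
  have hsq : ‖∑ i, x i‖ ^ 2 = (n + 1) * (1 + n * -(1 / n)) := by
    rw [← real_inner_self_eq_norm_sq, sum_inner]
    simp only [inner_sum]
    exact sum_sum_comp_inner_of_regular_simplex hcard hnorm hinner id
  rw [mul_neg, mul_one_div_cancel (Nat.cast_ne_zero.mpr hn), add_neg_cancel, mul_zero] at hsq
  exact norm_eq_zero.mp (pow_eq_zero_iff two_ne_zero |>.mp hsq)

theorem frameOperator_eq_smul_of_regular_simplex [FiniteDimensional ℝ E]
    (hdim : finrank ℝ E = n) (hn : n ≠ 0) :
    frameOperator x = ((n + 1) / n : ℝ) • LinearMap.id := by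
  have hn' : (n : ℝ) ≠ 0 := Nat.cast_ne_zero.mpr hn
  refine frameOperator_eq_smul_of_frame_potential ?_ ?_
  · simp [hnorm, hcard, hdim]
    field_simp
  · rw [sum_sum_comp_inner_of_regular_simplex hcard hnorm hinner (· ^ 2), hdim]
    field_simp

end RegularSimplex

end FrameOperator

section ComplexCoordinates

variable {κ : Type*} {ι : Type*} [Fintype ι]

def coordsWithConj (u : EuclideanSpace ℂ κ) : κ ⊕ κ → ℂ :=
  Sum.elim (fun j => u j) (fun j => conj (u j))

@[simp] theorem coordsWithConj_inl (u : EuclideanSpace ℂ κ) (j : κ) :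
    coordsWithConj u (.inl j) = u j := rfl

@[simp] theorem coordsWithConj_inr (u : EuclideanSpace ℂ κ) (j : κ) :
    coordsWithConj u (.inr j) = conj (u j) := rfl

theorem continuous_coordsWithConj :
    Continuous (coordsWithConj : EuclideanSpace ℂ κ → κ ⊕ κ → ℂ) := by
  refine continuous_pi fun a => ?_
  rcases a with j | j
  · exact PiLp.continuous_apply 2 _ j
  · exact Complex.continuous_conj.comp (PiLp.continuous_apply 2 _ j)

theorem re_hInnerC {d : ℕ} (u v : EuclideanSpace ℂ (Fin d)) : (hInnerC u v).re = ⟪u, v⟫ := by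
  simp [hInnerC, PiLp.inner_apply, Complex.re_sum, mul_comm]

theorem sum_mul_conj_eq_norm_sq [Fintype κ] (u : EuclideanSpace ℂ κ) :
    ∑ j, u j * conj (u j) = (‖u‖ ^ 2 : ℝ) := by
  rw [EuclideanSpace.norm_sq_eq]
  push_cast
  simp [Complex.mul_conj, Complex.normSq_eq_norm_sq]

theorem sum_coordsWithConj_eq_zero {x : ι → EuclideanSpace ℂ κ} (hx : ∑ i, x i = 0)
    (a : κ ⊕ κ) : ∑ i, coordsWithConj (x i) a = 0 := by
  rcases a with j | j
  · simpa using congrArg (fun v => v j) hx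
  · simpa [← map_sum] using congrArg (fun v => v j) hx

def diagUnitary [Fintype κ] (u : κ → unitary ℂ) :
    EuclideanSpace ℂ κ ≃ₗᵢ[ℂ] EuclideanSpace ℂ κ :=
  LinearIsometryEquiv.piLpCongrRight 2 fun m => u m • LinearIsometryEquiv.refl ℂ ℂ

theorem coordsWithConj_diagUnitary [Fintype κ] (u : κ → unitary ℂ) (v : EuclideanSpace ℂ κ)
    (a : κ ⊕ κ) :
    coordsWithConj (diagUnitary u v) a
      = Sum.elim (fun m => (u m : ℂ)) (fun m => conj (u m : ℂ)) a * coordsWithConj v a := by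
  rcases a with m | m <;> simp [diagUnitary]

section TightFrame

variable [Fintype κ] [DecidableEq κ] {x : ι → EuclideanSpace ℂ κ} {c : ℝ}
  (hx : frameOperator x = c • LinearMap.id)
include hx

/- Testing the frame identity against `e_k` and `i e_k` reads off the real and imaginary parts
of the `k`-th coordinates. -/
theorem sum_re_mul_of_frameOperator_eq_smul (j k : κ) :
    ∑ i, (x i k).re * x i j = if j = k then (c : ℂ) else 0 := by
  have := congrArg (fun v => v j) (LinearMap.congr_fun hx (EuclideanSpace.single k 1))
  simpa [PiLp.inner_apply, apply_ite Complex.re] using this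

theorem sum_im_mul_of_frameOperator_eq_smul (j k : κ) :
    ∑ i, (x i k).im * x i j = if j = k then c * Complex.I else 0 := by
  have := congrArg (fun v => v j) (LinearMap.congr_fun hx (EuclideanSpace.single k Complex.I))
  simpa [PiLp.inner_apply, apply_ite Complex.re] using this

theorem sum_mul_eq_zero_of_frameOperator_eq_smul (j k : κ) : ∑ i, x i j * x i k = 0 := by
  calc ∑ i, x i j * x i k
      = ∑ i, (x i k).re * x i j + Complex.I * ∑ i, (x i k).im * x i j := by
        rw [mul_sum, ← sum_add_distrib]
        refine sum_congr rfl fun i _ => ?_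
        conv_lhs => rw [← Complex.re_add_im (x i k)]
        ring
    _ = 0 := by
        rw [sum_re_mul_of_frameOperator_eq_smul hx, sum_im_mul_of_frameOperator_eq_smul hx]
        split_ifs
        · linear_combination (c : ℂ) * Complex.I_sq
        · simp

theorem sum_mul_conj_of_frameOperator_eq_smul (j k : κ) :
    ∑ i, x i j * conj (x i k) = if j = k then (2 * c : ℂ) else 0 := by
  calc ∑ i, x i j * conj (x i k)
      = ∑ i, (x i k).re * x i j - Complex.I * ∑ i, (x i k).im * x i j := by
        rw [mul_sum, ← sum_sub_distrib]
        refine sum_congr rfl fun i _ => ?_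
        conv_lhs => rw [← Complex.re_add_im (x i k)]
        simp only [map_add, map_mul, Complex.conj_ofReal, Complex.conj_I]
        ring
    _ = if j = k then (2 * c : ℂ) else 0 := by
        rw [sum_re_mul_of_frameOperator_eq_smul hx, sum_im_mul_of_frameOperator_eq_smul hx]
        split_ifs
        · linear_combination -(c : ℂ) * Complex.I_sq
        · simp

theorem sum_coordsWithConj_mul_of_frameOperator_eq_smul (a b : κ ⊕ κ) :
    ∑ i, coordsWithConj (x i) a * coordsWithConj (x i) b
      = if b = a.swap then (2 * c : ℂ) else 0 := by
  rcases a with j | j <;> rcases b with k | k <;> simp only [coordsWithConj_inl,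
    coordsWithConj_inr, Sum.swap_inl, Sum.swap_inr, reduceCtorEq, if_false, Sum.inl.injEq,
    Sum.inr.injEq]
  · exact sum_mul_eq_zero_of_frameOperator_eq_smul hx j k
  · rw [sum_mul_conj_of_frameOperator_eq_smul hx]
    exact if_congr eq_comm rfl rfl
  · simp_rw [mul_comm (conj _)]
    exact sum_mul_conj_of_frameOperator_eq_smul hx k j
  · simp_rw [← map_mul, ← map_sum, sum_mul_eq_zero_of_frameOperator_eq_smul hx, map_zero]

end TightFrame

end ComplexCoordinates

section UniformMeasure

variable {d : ℕ} {μ : Measure (CSph d)}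

theorem continuous_csMap (f : EuclideanSpace ℂ (Fin d) ≃ₗᵢ[ℂ] EuclideanSpace ℂ (Fin d)) :
    Continuous (csMap f) :=
  (f.continuous.comp continuous_subtype_val).subtype_mk _

theorem continuous_coordsWithConj_apply (a : Fin d ⊕ Fin d) :
    Continuous fun w : CSph d => coordsWithConj (w : EuclideanSpace ℂ (Fin d)) a :=
  (continuous_apply a).comp (continuous_coordsWithConj.comp continuous_subtype_val)

theorem integral_comp_csMap (hμ : IsUniformC μ)
    (f : EuclideanSpace ℂ (Fin d) ≃ₗᵢ[ℂ] EuclideanSpace ℂ (Fin d))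
    {g : CSph d → ℂ} (hg : AEStronglyMeasurable g μ) :
    ∫ w, g (csMap f w) ∂μ = ∫ w, g w ∂μ := by
  rw [← integral_map (continuous_csMap f).aemeasurable (by rwa [hμ.2 f]), hμ.2 f]

theorem integral_eq_zero_of_comp_csMap_eq_mul (hμ : IsUniformC μ)
    (f : EuclideanSpace ℂ (Fin d) ≃ₗᵢ[ℂ] EuclideanSpace ℂ (Fin d))
    {g : CSph d → ℂ} (hg : AEStronglyMeasurable g μ) {c : ℂ} (hc : c ≠ 1)
    (hgf : ∀ w, g (csMap f w) = c * g w) : ∫ w, g w ∂μ = 0 := by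
  have h := integral_comp_csMap hμ f hg
  simp only [hgf, integral_const_mul] at h
  exact (mul_left_eq_self₀.mp h).resolve_left hc

theorem integral_coordsWithConj (hμ : IsUniformC μ) (a : Fin d ⊕ Fin d) :
    ∫ w, coordsWithConj (w : EuclideanSpace ℂ (Fin d)) a ∂μ = 0 :=
  integral_eq_zero_of_comp_csMap_eq_mul hμ (.neg ℂ) (c := -1)
    (continuous_coordsWithConj_apply a).aestronglyMeasurable (by norm_num)
    fun w => by rcases a with j | j <;> simp [csMap]

/- Multiplying the coordinate that `a` refers to by `i` multiplies the integrand by `i`, `-i` or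
`-1`; only for `b = a.swap` do the two phases cancel. -/
theorem integral_coordsWithConj_mul_of_ne_swap (hμ : IsUniformC μ) {a b : Fin d ⊕ Fin d}
    (hab : b ≠ a.swap) :
    ∫ w, coordsWithConj (w : EuclideanSpace ℂ (Fin d)) a
      * coordsWithConj (w : EuclideanSpace ℂ (Fin d)) b ∂μ = 0 := by
  obtain ⟨j, hj⟩ : ∃ j, a = .inl j ∨ a = .inr j := by rcases a with j | j <;> exact ⟨j, by simp⟩
  let u : Fin d → unitary ℂ := Pi.mulSingle j ⟨Complex.I, by simp [Unitary.mem_iff]⟩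
  let φ : Fin d ⊕ Fin d → ℂ := Sum.elim (fun m => (u m : ℂ)) (fun m => conj (u m : ℂ))
  refine integral_eq_zero_of_comp_csMap_eq_mul hμ (diagUnitary u) (c := φ a * φ b)
    ((continuous_coordsWithConj_apply a).mul
      (continuous_coordsWithConj_apply b)).aestronglyMeasurable ?_ fun w => ?_
  · rcases hj with rfl | rfl <;> rcases b with k | k <;> by_cases hk : k = j <;>
      simp_all [φ, u, Pi.mulSingle_apply, Complex.ext_iff] <;> norm_num
  · simp only [csMap, coordsWithConj_diagUnitary]
    ring

theorem integral_coord_mul_conj (hμ : IsUniformC μ) (j : Fin d) :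
    ∫ w, (w : EuclideanSpace ℂ (Fin d)) j * conj ((w : EuclideanSpace ℂ (Fin d)) j) ∂μ
      = (d : ℂ)⁻¹ := by
  have := hμ.1
  have hcont : ∀ k, Continuous fun w : CSph d =>
      (w : EuclideanSpace ℂ (Fin d)) k * conj ((w : EuclideanSpace ℂ (Fin d)) k) := fun k =>
    (continuous_coordsWithConj_apply (.inl k)).mul (continuous_coordsWithConj_apply (.inr k))
  have hperm : ∀ k, ∫ w, (w : EuclideanSpace ℂ (Fin d)) k
      * conj ((w : EuclideanSpace ℂ (Fin d)) k) ∂μ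
      = ∫ w, (w : EuclideanSpace ℂ (Fin d)) j * conj ((w : EuclideanSpace ℂ (Fin d)) j) ∂μ :=
    fun k => by
      simpa [csMap] using integral_comp_csMap hμ
        (LinearIsometryEquiv.piLpCongrLeft 2 ℂ ℂ (Equiv.swap j k)) (hcont j).aestronglyMeasurable
  have htotal : ∑ k, ∫ w, (w : EuclideanSpace ℂ (Fin d)) k
      * conj ((w : EuclideanSpace ℂ (Fin d)) k) ∂μ = 1 := by
    rw [← integral_finsetSum _ fun k _ =>
      (hcont k).integrable_of_hasCompactSupport (.of_compactSpace _)]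
    simp [sum_mul_conj_eq_norm_sq]
  simp only [hperm, sum_const, card_univ, Fintype.card_fin, nsmul_eq_mul] at htotal
  exact eq_inv_of_mul_eq_one_right htotal

theorem integral_coordsWithConj_mul (hμ : IsUniformC μ) (a b : Fin d ⊕ Fin d) :
    ∫ w, coordsWithConj (w : EuclideanSpace ℂ (Fin d)) a
      * coordsWithConj (w : EuclideanSpace ℂ (Fin d)) b ∂μ
      = if b = a.swap then (d : ℂ)⁻¹ else 0 := by
  split_ifs with hab
  · subst hab
    rcases a with j | j
    · exact integral_coord_mul_conj hμ j
    · simpa [mul_comm] using integral_coord_mul_conj hμ j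
  · exact integral_coordsWithConj_mul_of_ne_swap hμ hab

end UniformMeasure

section Design

variable {d : ℕ}

theorem evalC_eq_eval (Q : MvPolynomial (Fin d ⊕ Fin d) ℂ) (w : CSph d) :
    evalC Q w = eval (coordsWithConj (w : EuclideanSpace ℂ (Fin d))) Q := rfl

theorem integrable_evalC {μ : Measure (CSph d)} [IsFiniteMeasure μ]
    (Q : MvPolynomial (Fin d ⊕ Fin d) ℂ) : Integrable (evalC Q) μ :=
  ((continuous_eval Q).comp (continuous_coordsWithConj.comp continuous_subtype_val))
    |>.integrable_of_hasCompactSupport (.of_compactSpace _)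

def integralEvalC (μ : Measure (CSph d)) [IsFiniteMeasure μ] :
    MvPolynomial (Fin d ⊕ Fin d) ℂ →ₗ[ℂ] ℂ where
  toFun Q := ∫ w, evalC Q w ∂μ
  map_add' P Q := by
    simp only [evalC_eq_eval, map_add]
    exact integral_add (integrable_evalC P) (integrable_evalC Q)
  map_smul' c Q := by
    simp only [evalC_eq_eval, smul_eval, integral_const_mul, smul_eq_mul, RingHom.id_apply]

def meanEvalC {ι : Type*} [Fintype ι] (z : ι → CSph d) :
    MvPolynomial (Fin d ⊕ Fin d) ℂ →ₗ[ℂ] ℂ :=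
  (Fintype.card ι : ℂ)⁻¹ •
    ∑ i, (aeval (coordsWithConj (z i : EuclideanSpace ℂ (Fin d)))).toLinearMap

theorem isTriDesign_two_of_moments {ι : Type} [Fintype ι] [Nonempty ι] {μ : Measure (CSph d)}
    [IsProbabilityMeasure μ] {z : ι → CSph d}
    (h1 : ∀ a, (Fintype.card ι : ℂ)⁻¹ * ∑ i, coordsWithConj (z i : EuclideanSpace ℂ (Fin d)) a
      = ∫ w, coordsWithConj (w : EuclideanSpace ℂ (Fin d)) a ∂μ)
    (h2 : ∀ a b, (Fintype.card ι : ℂ)⁻¹ * ∑ i, coordsWithConj (z i : EuclideanSpace ℂ (Fin d)) a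
        * coordsWithConj (z i : EuclideanSpace ℂ (Fin d)) b
      = ∫ w, coordsWithConj (w : EuclideanSpace ℂ (Fin d)) a
        * coordsWithConj (w : EuclideanSpace ℂ (Fin d)) b ∂μ) :
    IsTriDesign μ 2 z := by
  intro Q hQ
  have := mem_of_totalDegree_le_two (S := LinearMap.eqLocus (meanEvalC z) (integralEvalC μ))
    ?_ ?_ ?_ hQ
  · simpa [meanEvalC, integralEvalC, evalC_eq_eval] using this
  · simp [meanEvalC, integralEvalC, evalC_eq_eval]
  · intro a
    simpa [meanEvalC, integralEvalC, evalC_eq_eval] using h1 a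
  · intro a b
    simpa [meanEvalC, integralEvalC, evalC_eq_eval] using h2 a b

end Design

/-- a regular simplex of `2d+1` points on `Ω^d` is a triangular complex
spherical `2`-design. -/
theorem simplex_is_two_design (d : ℕ) (hd : 1 ≤ d)
    (μ : Measure (CSph d)) (hμ : IsUniformC μ)
    (z : Fin (2 * d + 1) → CSph d)
    (hz : ∀ i j, i ≠ j →
      (hInnerC ((z i) : EuclideanSpace ℂ (Fin d)) ((z j) : EuclideanSpace ℂ (Fin d))).re =
        -(1 / (2 * (d : ℝ)))) :
    IsTriDesign μ 2 z := by
  have := hμ.1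
  set x : Fin (2 * d + 1) → EuclideanSpace ℂ (Fin d) := fun i => z i
  have hcard : Fintype.card (Fin (2 * d + 1)) = 2 * d + 1 := Fintype.card_fin _
  have hnorm : ∀ i, ‖x i‖ = 1 := fun i => mem_sphere_zero_iff_norm.mp (z i).2
  have hinner : ∀ i j, i ≠ j → ⟪x i, x j⟫ = -(1 / ((2 * d : ℕ) : ℝ)) := fun i j hij => by
    rw [← re_hInnerC, hz i j hij]
    push_cast
    rfl
  have hn : 2 * d ≠ 0 := by omega
  have hcentred := sum_eq_zero_of_regular_simplex hcard hnorm hinner hn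
  have htight := frameOperator_eq_smul_of_regular_simplex hcard hnorm hinner
    (by rw [finrank_real_of_complex, finrank_euclideanSpace_fin]) hn
  refine isTriDesign_two_of_moments (fun a => ?_) (fun a b => ?_)
  · rw [sum_coordsWithConj_eq_zero hcentred, integral_coordsWithConj hμ, mul_zero]
  · rw [sum_coordsWithConj_mul_of_frameOperator_eq_smul htight, integral_coordsWithConj_mul hμ,
      Fintype.card_fin]
    split_ifs
    · have hd' : (d : ℂ) ≠ 0 := by exact_mod_cast (show d ≠ 0 by omega)
      have hN : 2 * (d : ℂ) + 1 ≠ 0 := by norm_cast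
      push_cast
      field_simp
    · rw [mul_zero]
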